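/- Let S : ℤ/Nℤ → ℂ satisfy S = Σ_{i=1}^{B} Ŝ(ω_i)φ_{ω_i} with distinct frequencies ω_i, and suppose χ_T has χ̂_T(0) = 1 and |χ̂_T(ω)| ≤ √λ for all ω ≠ 0. If for some frequency ω, |Ŝ(ω)|² > Bλ‖S‖², then the windowed signal S₁ = S·χ_T satisfies |Ŝ₁(ω)| ≥ |Ŝ(ω)| - √(Bλ)‖S‖ > 0; in particular ω remains a frequency with nonzero coefficient of S₁. -/

import Mathlib

open Finset

/-!
Since `χ̂_T(0) = 1`, the term `w' = ω` of the convolution `Ŝ₁(ω) = ∑ Ŝ(w') χ̂_T(ω - w')` is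
exactly `Ŝ(ω)`; every other term is at most `√λ |Ŝ(w')|`, so by Cauchy–Schwarz over the `B`
frequencies `|Ŝ₁(ω) - Ŝ(ω)| ≤ √λ √B ‖S‖`. The hypothesis `|Ŝ(ω)|² > Bλ‖S‖²` makes this error
strictly smaller than `|Ŝ(ω)|`, and in particular forces `ω` to be one of the frequencies.
-/

theorem Finset.sum_le_sqrt_card_mul_sqrt_sum_sq {ι : Type*} (s : Finset ι) (f : ι → ℝ) :
    ∑ i ∈ s, f i ≤ √(#s : ℝ) * √(∑ i ∈ s, f i ^ 2) := by
  rw [← Real.sqrt_mul (Nat.cast_nonneg _)]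
  exact (le_abs_self _).trans (Real.abs_le_sqrt sq_sum_le_card_mul_sum_sq)

theorem norm_sum_mul_sub_sub_le_of_norm_le {G 𝕜 : Type*} [AddGroup G] [DecidableEq G]
    [NormedRing 𝕜] {s : Finset G} {ω : G} (hω : ω ∈ s) (f χ : G → 𝕜) (hχ0 : χ 0 = 1) {c : ℝ}
    (hχ : ∀ w, w ≠ 0 → ‖χ w‖ ≤ c) :
    ‖∑ w ∈ s, f w * χ (ω - w) - f ω‖ ≤ c * ∑ w ∈ s.erase ω, ‖f w‖ := by
  rw [← add_sum_erase s _ hω, sub_self, hχ0, mul_one, add_sub_cancel_left, mul_sum]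
  refine (norm_sum_le _ _).trans (sum_le_sum fun w hw => ?_)
  have hne : ω - w ≠ 0 := sub_ne_zero.mpr (ne_of_mem_erase hw).symm
  calc ‖f w * χ (ω - w)‖ ≤ ‖f w‖ * ‖χ (ω - w)‖ := norm_mul_le _ _
    _ ≤ ‖f w‖ * c := by gcongr; exact hχ _ hne
    _ = c * ‖f w‖ := mul_comm _ _

theorem stmt_19_general (N B : ℕ) (lam : ℝ) (hlam : 0 ≤ lam)
    (Shat χhat S1hat : ZMod N → ℂ)
    (Ωs : Finset (ZMod N)) (hcard : Ωs.card = B)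
    (hsupp : ∀ w : ZMod N, w ∉ Ωs → Shat w = 0)
    (hχ0 : χhat 0 = 1)
    (hχ : ∀ w : ZMod N, w ≠ 0 → ‖χhat w‖ ≤ Real.sqrt lam)
    (hS1 : ∀ w : ZMod N, S1hat w = ∑ w' ∈ Ωs, Shat w' * χhat (w - w'))
    (normS : ℝ) (hnorm : normS = Real.sqrt (∑ w ∈ Ωs, ‖Shat w‖ ^ 2))
    (ω : ZMod N)
    (hbig : ‖Shat ω‖ ^ 2 > B * lam * normS ^ 2) :
    ‖S1hat ω‖ ≥ ‖Shat ω‖ - Real.sqrt (B * lam) * normS ∧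
    0 < ‖S1hat ω‖ := by
  have hnormS : 0 ≤ normS := hnorm ▸ Real.sqrt_nonneg _
  have hsmall : √(B * lam) * normS < ‖Shat ω‖ := by
    rw [← Real.sqrt_sq hnormS, ← Real.sqrt_mul' _ (sq_nonneg _), ← Real.sqrt_sq (norm_nonneg _)]
    exact Real.sqrt_lt_sqrt (by positivity) hbig
  have hω : ω ∈ Ωs := by
    by_contra h
    rw [hsupp ω h, norm_zero] at hsmall
    exact hsmall.not_ge (by positivity)
  have herr : ‖S1hat ω - Shat ω‖ ≤ √(B * lam) * normS :=
    calc ‖S1hat ω - Shat ω‖ ≤ √lam * ∑ w ∈ Ωs.erase ω, ‖Shat w‖ :=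
          hS1 ω ▸ norm_sum_mul_sub_sub_le_of_norm_le hω _ _ hχ0 hχ
      _ ≤ √lam * ∑ w ∈ Ωs, ‖Shat w‖ := by
          gcongr
          exact erase_subset _ _
      _ ≤ √lam * (√B * normS) := by
          gcongr
          rw [hnorm, ← hcard]
          exact sum_le_sqrt_card_mul_sqrt_sum_sq Ωs _
      _ = √(B * lam) * normS := by rw [Real.sqrt_mul (Nat.cast_nonneg _)]; ring
  have hlow : ‖Shat ω‖ - √(B * lam) * normS ≤ ‖S1hat ω‖ := by
    linarith [norm_sub_norm_le (Shat ω) (S1hat ω), norm_sub_rev (Shat ω) (S1hat ω)]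
  exact ⟨hlow, by linarith⟩

/-- If `S` is supported on `B` frequencies, `χ̂_T(0) = 1`, `|χ̂_T(ω)| ≤ √λ` for
`ω ≠ 0`, and `|Ŝ(ω)|² > Bλ‖S‖²` for some frequency `ω`, then the windowed signal
`S₁ = S·χ_T` satisfies `|Ŝ₁(ω)| ≥ |Ŝ(ω)| - √(Bλ)‖S‖ > 0`; in particular `ω`
remains a frequency with nonzero coefficient of `S₁`. -/
theorem stmt_19 (N B : ℕ) [NeZero N] (lam : ℝ) (hlam : 0 ≤ lam)
    (Shat χhat S1hat : ZMod N → ℂ)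
    (Ωs : Finset (ZMod N)) (hcard : Ωs.card = B)
    (hsupp : ∀ w : ZMod N, w ∉ Ωs → Shat w = 0)
    (hχ0 : χhat 0 = 1)
    (hχ : ∀ w : ZMod N, w ≠ 0 → ‖χhat w‖ ≤ Real.sqrt lam)
    (hS1 : ∀ w : ZMod N, S1hat w = ∑ w' ∈ Ωs, Shat w' * χhat (w - w'))
    (normS : ℝ) (hnorm : normS = Real.sqrt (∑ w ∈ Ωs, ‖Shat w‖ ^ 2))
    (ω : ZMod N)
    (hbig : ‖Shat ω‖ ^ 2 > B * lam * normS ^ 2) :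
    ‖S1hat ω‖ ≥ ‖Shat ω‖ - Real.sqrt (B * lam) * normS ∧
    0 < ‖S1hat ω‖ :=
  stmt_19_general N B lam hlam Shat χhat S1hat Ωs hcard hsupp hχ0 hχ hS1 normS hnorm ω hbig
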